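/- If two leaves x, y of a protein tree P satisfy that their lowest common ancestor is labeled Spec or Dup by the LCA-reconciliation of P with G, then g(x) ≠ g(y). -/
import Mathlib


inductive BTree (α : Type) : Type
  | leaf : α → BTree α
  | node : BTree α → BTree α → BTree α
deriving DecidableEq

namespace BTree

variable {α β : Type} [DecidableEq α] [DecidableEq β]

/-- The set of leaf labels of a tree. -/
def leaves : BTree α → Finset α
  | leaf a => {a}
  | node l r => leaves l ∪ leaves r

/-- Number of leaves. -/
def leafCount : BTree α → ℕ
  | leaf _ => 1
  | node l r => leafCount l + leafCount r

/-- Number of internal nodes. -/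
def internalCount : BTree α → ℕ
  | leaf _ => 0
  | node l r => internalCount l + internalCount r + 1

/-- The nodes of a tree, identified with the subtrees they root. -/
def nodes : BTree α → List (BTree α)
  | leaf a => [leaf a]
  | node l r => node l r :: (nodes l ++ nodes r)

/-- `Anc t u` : `u` is a node of (the subtree rooted at) `t`,
i.e. `t` is an ancestor of `u` (possibly `t = u`). -/
def Anc (t u : BTree α) : Prop := u ∈ nodes t

/-- All leaf labels are pairwise distinct. -/
def distinctLeaves : BTree α → Prop
  | leaf _ => True
  | node l r => Disjoint (leaves l) (leaves r) ∧ distinctLeaves l ∧ distinctLeaves r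

/-- The (subtree rooted at the) lowest common ancestor of a set `L` of leaf labels. -/
def lca : BTree α → Finset α → BTree α
  | leaf a, _ => leaf a
  | node l r, L =>
    if L ⊆ leaves l then lca l L
    else if L ⊆ leaves r then lca r L
    else node l r

/-- LCA-extension of a leaf map `s : α → β` : the image in the lower tree `S` of a node
`x` of the upper tree, namely the lca in `S` of the images of the leaves below `x`. -/
def mapLca (S : BTree β) (s : α → β) (x : BTree α) : BTree β :=
  lca S ((leaves x).image s)

/-- Depth of the node `u` below the node `t` (number of edges on the path). -/
def depthOf : BTree α → BTree α → ℕ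
  | leaf _, _ => 0
  | node l r, u =>
    if node l r = u then 0
    else if u ∈ nodes l then depthOf l u + 1 else depthOf r u + 1

inductive GLabel : Type
  | Spec | Dup
deriving DecidableEq

/-- LCA-reconciliation labeling of the nodes of a gene tree with respect to
a species tree `S` (internal nodes only; leaves get the dummy label `Spec`). -/
def glab (S : BTree β) (s : α → β) : BTree α → GLabel
  | leaf _ => GLabel.Spec
  | node l r =>
    if mapLca S s (node l r) ≠ mapLca S s l ∧ mapLca S s (node l r) ≠ mapLca S s r
    then GLabel.Spec else GLabel.Dup

/-- Duplication cost `D(G,S)` : number of internal nodes labeled `Dup`. -/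
def dupCost (S : BTree β) (s : α → β) : BTree α → ℕ
  | leaf _ => 0
  | node l r =>
    (if glab S s (node l r) = GLabel.Dup then 1 else 0) + dupCost S s l + dupCost S s r

/-- Losses induced on the edge from `x` to its child `y`. -/
def lossEdge (S : BTree β) (s : α → β) (x y : BTree α) : ℕ :=
  if mapLca S s x = mapLca S s y then 0
  else (depthOf (mapLca S s x) (mapLca S s y) - 1) +
    (if glab S s x = GLabel.Dup then 1 else 0)

/-- Loss cost `L(G,S)` : total number of losses induced on the edges of `G`. -/
def lossCost (S : BTree β) (s : α → β) : BTree α → ℕ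
  | leaf _ => 0
  | node l r =>
    lossEdge S s (node l r) l + lossEdge S s (node l r) r + lossCost S s l + lossCost S s r

inductive PLabel : Type
  | Spec | Dup | Creat
deriving DecidableEq

/-- LCA-reconciliation labeling of the nodes of a protein tree `P` with respect to a
gene tree `G` (with its own labeling `lG`); leaves get the dummy label `Creat`. -/
def plab (G : BTree β) (g : α → β) (lG : BTree β → GLabel) : BTree α → PLabel
  | leaf _ => PLabel.Creat
  | node l r =>
    if mapLca G g (node l r) ≠ mapLca G g l ∧ mapLca G g (node l r) ≠ mapLca G g r then
      (match lG (mapLca G g (node l r)) with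
        | GLabel.Spec => PLabel.Spec
        | GLabel.Dup => PLabel.Dup)
    else PLabel.Creat

/-- Creation cost `C(P,G)` : number of internal nodes of `P` labeled `Creat`. -/
def creatCost (G : BTree β) (g : α → β) (lG : BTree β → GLabel) : BTree α → ℕ
  | leaf _ => 0
  | node l r =>
    (if plab G g lG (node l r) = PLabel.Creat then 1 else 0) +
      creatCost G g lG l + creatCost G g lG r

/-- Protein losses induced on the edge from `x` to its child `y`. -/
def plossEdge (G : BTree β) (g : α → β) (lG : BTree β → GLabel) (x y : BTree α) : ℕ :=
  if mapLca G g x = mapLca G g y then 0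
  else (depthOf (mapLca G g x) (mapLca G g y) - 1) +
    (if plab G g lG x = PLabel.Creat then 1 else 0)

/-- Protein loss cost `L(P,G)`. -/
def plossCost (G : BTree β) (g : α → β) (lG : BTree β → GLabel) : BTree α → ℕ
  | leaf _ => 0
  | node l r =>
    plossEdge G g lG (node l r) l + plossEdge G g lG (node l r) r +
      plossCost G g lG l + plossCost G g lG r

/-- Relabel the leaves of a tree via `f` (e.g. `g(P)`). -/
def relabel (f : α → β) : BTree α → BTree β
  | leaf a => leaf (f a)
  | node l r => node (relabel f l) (relabel f r)

end BTree


namespace BTree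

variable {α β : Type} [DecidableEq α] [DecidableEq β]

lemma lca_node_left {l r : BTree α} {L : Finset α} (h : L ⊆ leaves l) :
    lca (node l r) L = lca l L := by rw [lca, if_pos h]

lemma lca_node_right {l r : BTree α} {L : Finset α} (h1 : ¬ L ⊆ leaves l)
    (h2 : L ⊆ leaves r) : lca (node l r) L = lca r L := by
  rw [lca, if_neg h1, if_pos h2]

lemma lca_node_self {l r : BTree α} {L : Finset α} (h1 : ¬ L ⊆ leaves l)
    (h2 : ¬ L ⊆ leaves r) : lca (node l r) L = node l r := by
  rw [lca, if_neg h1, if_neg h2]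

lemma subset_leaves_lca {t : BTree α} {L : Finset α} (h : L ⊆ leaves t) :
    L ⊆ leaves (lca t L) := by
  induction t with
  | leaf a => simpa [lca] using h
  | node l r ihl ihr =>
    rw [lca]
    split
    · exact ihl ‹_›
    · split
      · exact ihr ‹_›
      · exact h

lemma lca_node_not_subset {t l r : BTree α} {L : Finset α}
    (h : lca t L = node l r) : ¬ L ⊆ leaves l ∧ ¬ L ⊆ leaves r := by
  induction t with
  | leaf a => simp [lca] at h
  | node tl tr ihl ihr =>
    rw [lca] at h
    split at h
    · exact ihl h
    · split at h
      · exact ihr h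
      · next hs1 hs2 =>
        obtain ⟨rfl, rfl⟩ : tl = l ∧ tr = r := by
          injection h with e1 e2; exact ⟨e1, e2⟩
        exact ⟨hs1, hs2⟩

lemma lca_union_eq {t : BTree β} (ht : t.distinctLeaves) {A B : Finset β} {b : β}
    (hA : b ∈ A) (hB : b ∈ B) (hbt : b ∈ leaves t) :
    lca t (A ∪ B) = lca t A ∨ lca t (A ∪ B) = lca t B := by
  induction t with
  | leaf a => left; simp [lca]
  | node l r ihl ihr =>
    obtain ⟨hd, hl, hr⟩ := ht
    by_cases hUl : A ∪ B ⊆ leaves l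
    · have hAl : A ⊆ leaves l := Finset.subset_union_left.trans hUl
      have hBl : B ⊆ leaves l := Finset.subset_union_right.trans hUl
      rw [lca_node_left hUl, lca_node_left hAl, lca_node_left hBl]
      exact ihl hl (hAl hA)
    · by_cases hUr : A ∪ B ⊆ leaves r
      · have hAr : A ⊆ leaves r := Finset.subset_union_left.trans hUr
        have hBr : B ⊆ leaves r := Finset.subset_union_right.trans hUr
        have hbl : b ∉ leaves l := Finset.disjoint_right.mp hd (hAr hA)
        have hAnl : ¬ A ⊆ leaves l := fun h => hbl (h hA)
        have hBnl : ¬ B ⊆ leaves l := fun h => hbl (h hB)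
        rw [lca_node_right hUl hUr, lca_node_right hAnl hAr,
          lca_node_right hBnl hBr]
        exact ihr hr (hAr hA)
      · rw [lca_node_self hUl hUr]
        rcases Finset.mem_union.mp hbt with hbl | hbr
        · have hbr : b ∉ leaves r := Finset.disjoint_left.mp hd hbl
          have hAnr : ¬ A ⊆ leaves r := fun h => hbr (h hA)
          have hBnr : ¬ B ⊆ leaves r := fun h => hbr (h hB)
          by_cases hAl : A ⊆ leaves l
          · have hBnl : ¬ B ⊆ leaves l := fun h =>
              hUl (Finset.union_subset hAl h)
            right; rw [lca_node_self hBnl hBnr]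
          · left; rw [lca_node_self hAl hAnr]
        · have hbl : b ∉ leaves l := Finset.disjoint_right.mp hd hbr
          have hAnl : ¬ A ⊆ leaves l := fun h => hbl (h hA)
          have hBnl : ¬ B ⊆ leaves l := fun h => hbl (h hB)
          by_cases hAr : A ⊆ leaves r
          · have hBnr : ¬ B ⊆ leaves r := fun h =>
              hUr (Finset.union_subset hAr h)
            right; rw [lca_node_self hBnl hBnr]
          · left; rw [lca_node_self hAnl hAr]

end BTree

open BTree in
/-- if two distinct leaves `x, y` of the protein tree `P` are such that
their lowest common ancestor is labeled `Spec` or `Dup` by the LCA-reconciliation of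
`P` with `G`, then `g x ≠ g y`. -/
theorem stmt11 {α β : Type} [DecidableEq α] [DecidableEq β]
    (G : BTree β) (g : α → β) (lG : BTree β → BTree.GLabel) (P : BTree α)
    (hP : P.distinctLeaves) (hG : G.distinctLeaves)
    (hmap : ∀ a ∈ P.leaves, g a ∈ G.leaves)
    (x y : α) (hx : x ∈ P.leaves) (hy : y ∈ P.leaves) (hxy : x ≠ y)
    (hlab : plab G g lG (P.lca {x, y}) ≠ PLabel.Creat) :
    g x ≠ g y := by
  intro hgxy
  have hsub : ({x, y} : Finset α) ⊆ P.leaves := by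
    intro a ha
    rcases Finset.mem_insert.mp ha with rfl | ha
    · exact hx
    · rw [Finset.mem_singleton.mp ha]; exact hy
  have hzleaves := subset_leaves_lca hsub
  rcases hz : P.lca {x, y} with a | ⟨l, r⟩
  · rw [hz] at hlab
    exact hlab rfl
  · rw [hz] at hlab hzleaves
    obtain ⟨hnl, hnr⟩ := lca_node_not_subset hz
    have hxz : x ∈ leaves (node l r) := hzleaves (by simp)
    have hyz : y ∈ leaves (node l r) := hzleaves (by simp)
    -- obtain a split: x and y in different children (up to swap)
    have hsplit : (x ∈ leaves l ∧ y ∈ leaves r) ∨ (x ∈ leaves r ∧ y ∈ leaves l) := by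
      rcases Finset.mem_union.mp hxz with hxl | hxr
      · left
        refine ⟨hxl, ?_⟩
        have hynl : y ∉ leaves l := by
          intro hyl
          exact hnl (by intro a ha; rcases Finset.mem_insert.mp ha with rfl | ha
                        · exact hxl
                        · rw [Finset.mem_singleton.mp ha]; exact hyl)
        rcases Finset.mem_union.mp hyz with h | h
        · exact absurd h hynl
        · exact h
      · right
        refine ⟨hxr, ?_⟩
        have hynr : y ∉ leaves r := by
          intro hyr
          exact hnr (by intro a ha; rcases Finset.mem_insert.mp ha with rfl | ha
                        · exact hxr
                        · rw [Finset.mem_singleton.mp ha]; exact hyr)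
        rcases Finset.mem_union.mp hyz with h | h
        · exact h
        · exact absurd h hynr
    have hcond : mapLca G g (node l r) ≠ mapLca G g l ∧
        mapLca G g (node l r) ≠ mapLca G g r := by
      by_contra h
      apply hlab
      rw [plab, if_neg h]
    have hbG : g x ∈ G.leaves := hmap x hx
    have hkey : lca G ((leaves l).image g ∪ (leaves r).image g)
        = lca G ((leaves l).image g) ∨
        lca G ((leaves l).image g ∪ (leaves r).image g)
        = lca G ((leaves r).image g) := by
      rcases hsplit with ⟨hxl, hyr⟩ | ⟨hxr, hyl⟩
      · exact lca_union_eq hG (Finset.mem_image_of_mem g hxl)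
          (hgxy ▸ Finset.mem_image_of_mem g hyr) hbG
      · exact lca_union_eq hG (hgxy ▸ Finset.mem_image_of_mem g hyl)
          (Finset.mem_image_of_mem g hxr) hbG
    have hmap' : mapLca G g (node l r)
        = lca G ((leaves l).image g ∪ (leaves r).image g) := by
      rw [mapLca, leaves, Finset.image_union]
    rcases hkey with h | h
    · exact hcond.1 (by rw [hmap', h]; rfl)
    · exact hcond.2 (by rw [hmap', h]; rfl)
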